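/- arXiv:2508.11449 — 2 statements merged into one kernel-verified Lean document; each statement's English description precedes it below -/
import Mathlib

section
/- Let φ be a formula in DNF, none of whose conjunctive clauses contains an atom together with its negation, let σ ⊆ sig(φ), and let φ^{-σ} be obtained from φ by deleting from every conjunctive clause all literals whose atom is not in σ. Then φ^{-σ} is logically equivalent to ∃p₁⋯∃pₙ.φ, where p₁,...,pₙ enumerate sig(φ) \ σ. -/
/-- A literal: an atom together with a polarity (`true` = positive). -/
abbrev Lit := ℕ × Bool

/-- Evaluation of a literal. -/
def litEval (v : ℕ → Bool) (ℓ : Lit) : Bool := if ℓ.2 then v ℓ.1 else !(v ℓ.1)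

/-- Evaluation of a conjunctive clause (list of literals, empty = ⊤). -/
def cclauseEval (v : ℕ → Bool) (c : List Lit) : Bool := c.all (litEval v)

/-- Evaluation of a DNF (list of conjunctive clauses, empty = ⊥). -/
def dnfEval (v : ℕ → Bool) (d : List (List Lit)) : Bool := d.any (cclauseEval v)

/-- Signature of a DNF: the set of atoms occurring in it. -/
def dnfSig (d : List (List Lit)) : Finset ℕ := (d.flatten.map Prod.fst).toFinset

/-- `satExistsF ps f v` holds iff some valuation agreeing with `v` except possibly on
the atoms in `ps` satisfies `f`. -/
def satExistsF : List ℕ → ((ℕ → Bool) → Bool) → (ℕ → Bool) → Prop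
  | [], f, v => f v = true
  | p :: ps, f, v => ∃ b : Bool, satExistsF ps f (Function.update v p b)

/-- Delete from every conjunctive clause all literals whose atom is not in `σ`. -/
def dnfDrop (σ : Finset ℕ) (d : List (List Lit)) : List (List Lit) :=
  d.map fun c => c.filter fun ℓ => ℓ.1 ∈ σ

/-!
Existentially quantifying a set `F` of atoms out of a conjunction of literals with no
complementary pair just deletes the literals over `F`: any valuation of the remaining literals
extends to one of the whole clause by making every literal over `F` true, which is possible
because no atom occurs with both polarities. Since `∃` commutes with `∨`, the same holds clause by
clause for a DNF, and on the atoms of `d` the atoms outside `σ` are exactly those of `ps`.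
-/

lemma satExistsF_iff (ps : List ℕ) (f : (ℕ → Bool) → Bool) (v : ℕ → Bool) :
    satExistsF ps f v ↔ ∃ w : ℕ → Bool, (∀ q ∉ ps, w q = v q) ∧ f w = true := by
  induction ps generalizing v with
  | nil =>
    refine ⟨fun h => ⟨v, fun _ _ => rfl, h⟩, ?_⟩
    rintro ⟨w, hw, hf⟩
    rwa [show w = v from funext fun q => hw q List.not_mem_nil] at hf
  | cons p ps ih =>
    simp only [satExistsF, ih]
    constructor
    · rintro ⟨b, w, hw, hf⟩
      refine ⟨w, fun q hq => ?_, hf⟩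
      rw [List.mem_cons, not_or] at hq
      rw [hw q hq.2, Function.update_of_ne hq.1]
    · rintro ⟨w, hw, hf⟩
      refine ⟨w p, w, fun q hq => ?_, hf⟩
      by_cases hqp : q = p
      · subst hqp
        rw [Function.update_self]
      · rw [Function.update_of_ne hqp]
        exact hw q (by simp [hqp, hq])

lemma mem_dnfSig {d : List (List Lit)} {c : List Lit} {ℓ : Lit} (hc : c ∈ d) (hℓ : ℓ ∈ c) :
    ℓ.1 ∈ dnfSig d := by
  simp only [dnfSig, List.mem_toFinset, List.mem_map]
  exact ⟨ℓ, List.mem_flatten.2 ⟨c, hc, hℓ⟩, rfl⟩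

section Forget

variable (F : ℕ → Prop) [DecidablePred F]

lemma cclauseEval_filter_iff_exists {c : List Lit}
    (hc : ∀ p : ℕ, ¬((p, true) ∈ c ∧ (p, false) ∈ c)) (v : ℕ → Bool) :
    cclauseEval v (c.filter fun ℓ => ¬F ℓ.1) = true ↔
      ∃ w : ℕ → Bool, (∀ q, ¬F q → w q = v q) ∧ cclauseEval w c = true := by
  simp only [cclauseEval, List.all_eq_true, List.mem_filter, decide_eq_true_eq]
  constructor
  · intro hv
    refine ⟨fun q => if F q then decide ((q, true) ∈ c) else v q,
      fun q hq => if_neg hq, ?_⟩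
    rintro ⟨q, b⟩ hℓ
    by_cases hq : F q
    · cases b with
      | true => simp [litEval, hq, hℓ]
      | false => simpa [litEval, hq] using fun h => hc q ⟨h, hℓ⟩
    · simpa [litEval, hq] using hv (q, b) ⟨hℓ, hq⟩
  · rintro ⟨w, hw, hwc⟩ ℓ ⟨hℓ, hF⟩
    simpa [litEval, hw ℓ.1 hF] using hwc ℓ hℓ

lemma dnfEval_map_filter_iff_exists {d : List (List Lit)}
    (hd : ∀ c ∈ d, ∀ p : ℕ, ¬((p, true) ∈ c ∧ (p, false) ∈ c)) (v : ℕ → Bool) :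
    dnfEval v (d.map fun c => c.filter fun ℓ => ¬F ℓ.1) = true ↔
      ∃ w : ℕ → Bool, (∀ q, ¬F q → w q = v q) ∧ dnfEval w d = true := by
  simp only [dnfEval, List.any_map, List.any_eq_true, Function.comp_apply]
  constructor
  · rintro ⟨c, hc, hv⟩
    obtain ⟨w, hw, hwc⟩ := (cclauseEval_filter_iff_exists F (hd c hc) v).1 hv
    exact ⟨w, hw, c, hc, hwc⟩
  · rintro ⟨w, hw, c, hc, hwc⟩
    exact ⟨c, hc, (cclauseEval_filter_iff_exists F (hd c hc) v).2 ⟨w, hw, hwc⟩⟩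

end Forget

theorem dnf_drop_equiv_exists_general (d : List (List Lit)) (σ : Finset ℕ)
    (hok : ∀ c ∈ d, ∀ p : ℕ, ¬(((p, true) ∈ c) ∧ ((p, false) ∈ c)))
    (ps : List ℕ) (hps : ps.toFinset = dnfSig d \ σ) :
    ∀ v : ℕ → Bool,
      dnfEval v (dnfDrop σ d) = true ↔ satExistsF ps (fun w => dnfEval w d) v := by
  intro v
  have hdrop : dnfDrop σ d = d.map fun c => c.filter fun ℓ => ¬ℓ.1 ∈ ps := by
    refine List.map_congr_left fun c hc => List.filter_congr fun ℓ hℓ => ?_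
    have hmem : ℓ.1 ∈ ps ↔ ℓ.1 ∉ σ := by
      rw [← List.mem_toFinset, hps, Finset.mem_sdiff]
      exact and_iff_right (mem_dnfSig hc hℓ)
    simp [hmem]
  rw [hdrop, dnfEval_map_filter_iff_exists (· ∈ ps) hok, satExistsF_iff]

/-- For a DNF `d` without complementary literals in any conjunctive clause,
dropping all literals over atoms outside `σ` yields a formula logically equivalent
to `∃ p₁ ⋯ ∃ pₙ. d`, where `p₁,…,pₙ` enumerate `sig(d) \ σ`. -/
theorem dnf_drop_equiv_exists (d : List (List Lit)) (σ : Finset ℕ)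
    (hok : ∀ c ∈ d, ∀ p : ℕ, ¬(((p, true) ∈ c) ∧ ((p, false) ∈ c)))
    (hσ : σ ⊆ dnfSig d)
    (ps : List ℕ) (hps : ps.toFinset = dnfSig d \ σ) :
    ∀ v : ℕ → Bool,
      dnfEval v (dnfDrop σ d) = true ↔ satExistsF ps (fun w => dnfEval w d) v :=
  dnf_drop_equiv_exists_general d σ hok ps hps
end

section
/- Let Φ be a set of clauses and p an atom. Let Ψ be the set of clauses obtained from Φ by adding all resolvents upon p of clauses in Φ and then removing all clauses containing p or ¬p. Then the conjunction of Ψ is logically equivalent to ∃p.Φ. -/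
/-- A clause (finite set of literals, read disjunctively) is satisfied by `v`. -/
def clauseSat (v : ℕ → Bool) (C : Finset Lit) : Prop := ∃ ℓ ∈ C, litEval v ℓ = true

/-- A clause set (read conjunctively) is satisfied by `v`. -/
def cnfSat (v : ℕ → Bool) (Φ : Finset (Finset Lit)) : Prop := ∀ C ∈ Φ, clauseSat v C

def resolventOn (p : ℕ) (C₁ C₂ : Finset Lit) : Finset Lit :=
  C₁.erase (p, true) ∪ C₂.erase (p, false)

def resolvents (Φ : Finset (Finset Lit)) (p : ℕ) : Finset (Finset Lit) :=
  ((Φ.filter fun C => (p, true) ∈ C) ×ˢ (Φ.filter fun C => (p, false) ∈ C)).image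
    fun q => resolventOn p q.1 q.2

def eliminateAtom (Φ : Finset (Finset Lit)) (p : ℕ) : Finset (Finset Lit) :=
  (Φ ∪ resolvents Φ p).filter fun C => (p, true) ∉ C ∧ (p, false) ∉ C

section

variable {Φ : Finset (Finset Lit)} {p : ℕ} {v : ℕ → Bool} {C C₁ C₂ : Finset Lit}

lemma litEval_update_self (v : ℕ → Bool) (p : ℕ) (b c : Bool) :
    litEval (Function.update v p b) (p, c) = (c == b) := by
  cases b <;> cases c <;> simp [litEval]

lemma litEval_update_of_ne (b : Bool) {ℓ : Lit} (h : ℓ.1 ≠ p) :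
    litEval (Function.update v p b) ℓ = litEval v ℓ := by
  simp [litEval, Function.update_of_ne h]

lemma fst_ne_of_ne_of_ne {ℓ : Lit} (hpos : ℓ ≠ (p, true)) (hneg : ℓ ≠ (p, false)) :
    ℓ.1 ≠ p := by
  obtain ⟨a, c⟩ := ℓ
  rintro rfl
  cases c <;> simp_all

lemma clauseSat_update_iff (b : Bool) (hpos : (p, true) ∉ C) (hneg : (p, false) ∉ C) :
    clauseSat (Function.update v p b) C ↔ clauseSat v C :=
  exists_congr fun _ => and_congr_right fun hℓ => by
    rw [litEval_update_of_ne b (fst_ne_of_ne_of_ne (ne_of_mem_of_not_mem hℓ hpos)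
      (ne_of_mem_of_not_mem hℓ hneg))]

lemma clauseSat_resolventOn (h₁ : clauseSat v C₁) (h₂ : clauseSat v C₂) :
    clauseSat v (resolventOn p C₁ C₂) := by
  obtain ⟨ℓ₁, hℓ₁, hv₁⟩ := h₁
  obtain ⟨ℓ₂, hℓ₂, hv₂⟩ := h₂
  by_cases hpos : ℓ₁ = (p, true)
  · have hneg : ℓ₂ ≠ (p, false) := by
      rintro rfl
      simp_all [litEval]
    exact ⟨ℓ₂, Finset.mem_union_right _ (Finset.mem_erase.mpr ⟨hneg, hℓ₂⟩), hv₂⟩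
  · exact ⟨ℓ₁, Finset.mem_union_left _ (Finset.mem_erase.mpr ⟨hpos, hℓ₁⟩), hv₁⟩

lemma resolventOn_mem_resolvents (h₁ : C₁ ∈ Φ) (hpos : (p, true) ∈ C₁) (h₂ : C₂ ∈ Φ)
    (hneg : (p, false) ∈ C₂) : resolventOn p C₁ C₂ ∈ resolvents Φ p :=
  Finset.mem_image.mpr ⟨(C₁, C₂), Finset.mem_product.mpr
    ⟨Finset.mem_filter.mpr ⟨h₁, hpos⟩, Finset.mem_filter.mpr ⟨h₂, hneg⟩⟩, rfl⟩

lemma mem_eliminateAtom :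
    C ∈ eliminateAtom Φ p ↔ (C ∈ Φ ∨ C ∈ resolvents Φ p) ∧ (p, true) ∉ C ∧ (p, false) ∉ C := by
  simp only [eliminateAtom, Finset.mem_filter, Finset.mem_union]

lemma cnfSat_union_resolvents (h : cnfSat v Φ) : cnfSat v (Φ ∪ resolvents Φ p) := by
  intro C hC
  rcases Finset.mem_union.mp hC with hC | hC
  · exact h C hC
  · obtain ⟨⟨C₁, C₂⟩, hq, rfl⟩ := Finset.mem_image.mp hC
    simp only [Finset.mem_product, Finset.mem_filter] at hq
    exact clauseSat_resolventOn (h C₁ hq.1.1) (h C₂ hq.2.1)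

lemma cnfSat_eliminateAtom_of_cnfSat_update {b : Bool} (h : cnfSat (Function.update v p b) Φ) :
    cnfSat v (eliminateAtom Φ p) := by
  intro C hC
  obtain ⟨hmem, hpos, hneg⟩ := mem_eliminateAtom.mp hC
  exact (clauseSat_update_iff b hpos hneg).mp
    (cnfSat_union_resolvents h C (Finset.mem_union.mpr hmem))

lemma notMem_and_mem_of_not_clauseSat_update (h : cnfSat v (eliminateAtom Φ p)) (hC : C ∈ Φ)
    (b : Bool) (hfalse : ¬ clauseSat (Function.update v p b) C) : (p, b) ∉ C ∧ (p, !b) ∈ C := by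
  have hb : (p, b) ∉ C := fun hmem => hfalse ⟨_, hmem, by simp [litEval_update_self]⟩
  refine ⟨hb, by_contra fun hnb => hfalse ?_⟩
  have hpos : (p, true) ∉ C := by cases b; exacts [hnb, hb]
  have hneg : (p, false) ∉ C := by cases b; exacts [hb, hnb]
  exact (clauseSat_update_iff b hpos hneg).mpr
    (h C (mem_eliminateAtom.mpr ⟨Or.inl hC, hpos, hneg⟩))

lemma exists_cnfSat_update_of_cnfSat_eliminateAtom (h : cnfSat v (eliminateAtom Φ p)) :
    ∃ b : Bool, cnfSat (Function.update v p b) Φ := by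
  by_contra hnone
  have hfalsified (b : Bool) : ∃ C ∈ Φ, ¬ clauseSat (Function.update v p b) C := by
    simpa only [cnfSat, not_forall, exists_prop] using not_exists.mp hnone b
  obtain ⟨C₁, hC₁, hfalse₁⟩ := hfalsified true
  obtain ⟨C₂, hC₂, hfalse₂⟩ := hfalsified false
  obtain ⟨hpos₁, hneg₁⟩ := notMem_and_mem_of_not_clauseSat_update h hC₁ true hfalse₁
  obtain ⟨hneg₂, hpos₂⟩ := notMem_and_mem_of_not_clauseSat_update h hC₂ false hfalse₂
  have hRpos : (p, true) ∉ resolventOn p C₂ C₁ := by simp [resolventOn, hpos₁]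
  have hRneg : (p, false) ∉ resolventOn p C₂ C₁ := by simp [resolventOn, hneg₂]
  obtain ⟨ℓ, hℓ, hv⟩ := h _ (mem_eliminateAtom.mpr
    ⟨Or.inr (resolventOn_mem_resolvents hC₂ hpos₂ hC₁ hneg₁), hRpos, hRneg⟩)
  have hℓp : ℓ.1 ≠ p :=
    fst_ne_of_ne_of_ne (ne_of_mem_of_not_mem hℓ hRpos) (ne_of_mem_of_not_mem hℓ hRneg)
  rcases Finset.mem_union.mp hℓ with hℓ | hℓ
  · exact hfalse₂ ⟨ℓ, Finset.mem_of_mem_erase hℓ, by rwa [litEval_update_of_ne _ hℓp]⟩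
  · exact hfalse₁ ⟨ℓ, Finset.mem_of_mem_erase hℓ, by rwa [litEval_update_of_ne _ hℓp]⟩

end

/-- Adding to `Φ` all resolvents upon `p` and then removing all clauses containing
`p` or `¬p` yields a clause set logically equivalent to `∃p.Φ`. -/
theorem resolution_eliminates_atom (Φ : Finset (Finset Lit)) (p : ℕ) :
    ∀ v : ℕ → Bool,
      cnfSat v
        ((Φ ∪ ((Φ.filter fun C => (p, true) ∈ C) ×ˢ
               (Φ.filter fun C => (p, false) ∈ C)).image
                 fun q => q.1.erase (p, true) ∪ q.2.erase (p, false)).filter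
          fun C => (p, true) ∉ C ∧ (p, false) ∉ C)
      ↔ ∃ b : Bool, cnfSat (Function.update v p b) Φ := fun _ =>
  ⟨exists_cnfSat_update_of_cnfSat_eliminateAtom,
    fun ⟨_, h⟩ => cnfSat_eliminateAtom_of_cnfSat_update h⟩
end
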